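/- There is a bijection from r-colored j-noncrossing k-nonnesting permutations of [n] to pairs (Λ⁺, Λ⁻) of r-colored j-noncrossing k-nonnesting matchings of [2n] such that the odd numbers {1,3,...,2n−1} form the disjoint union of min(Λ⁺)\max(Λ⁺) and max(Λ⁻)\min(Λ⁻), and the even numbers {2,4,...,2n} form the disjoint union of max(Λ⁺)\min(Λ⁺) and min(Λ⁻)\max(Λ⁻). -/

import Mathlib

open Finset

/-- `IsArc P i j` : `(i,j)` is an arc of the set partition `P`. -/
def IsArc {n : ℕ} (P : Finpartition (Finset.univ : Finset (Fin n))) (i j : Fin n) : Prop :=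
  i < j ∧ ∃ B ∈ P.parts, i ∈ B ∧ j ∈ B ∧ ∀ k ∈ B, i < k → j ≤ k

/-- The set of minimal elements of blocks of `P`. -/
def blockMin {n : ℕ} (P : Finpartition (Finset.univ : Finset (Fin n))) : Set (Fin n) :=
  {i | ∃ B ∈ P.parts, i ∈ B ∧ ∀ k ∈ B, i ≤ k}

/-- The set of maximal elements of blocks of `P`. -/
def blockMax {n : ℕ} (P : Finpartition (Finset.univ : Finset (Fin n))) : Set (Fin n) :=
  {i | ∃ B ∈ P.parts, i ∈ B ∧ ∀ k ∈ B, k ≤ i}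

/-- An `r`-colored partition of `[n]`. -/
structure ColoredPartition (n r : ℕ) where
  P : Finpartition (Finset.univ : Finset (Fin n))
  color : ∀ i j : Fin n, IsArc P i j → Fin r

/-- `Λ` has a `k`-crossing: `k` same-colored arcs with
`i₁ < ⋯ < i_k < j₁ < ⋯ < j_k`. -/
def HasCrossing {n r : ℕ} (Λ : ColoredPartition n r) (k : ℕ) : Prop :=
  ∃ (f g : Fin k → Fin n) (c : Fin r),
    StrictMono f ∧ StrictMono g ∧ (∀ s t : Fin k, f s < g t) ∧
    ∀ t, ∃ h : IsArc Λ.P (f t) (g t), Λ.color (f t) (g t) h = c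

/-- `Λ` has a `k`-nesting: `k` same-colored arcs with
`i₁ < ⋯ < i_k < j_k < ⋯ < j₁`. -/
def HasNesting {n r : ℕ} (Λ : ColoredPartition n r) (k : ℕ) : Prop :=
  ∃ (f g : Fin k → Fin n) (c : Fin r),
    StrictMono f ∧ StrictAnti g ∧ (∀ s t : Fin k, f s < g t) ∧
    ∀ t, ∃ h : IsArc Λ.P (f t) (g t), Λ.color (f t) (g t) h = c

/-- Uncolored `k`-crossing. -/
def HasCrossingP {n : ℕ} (P : Finpartition (Finset.univ : Finset (Fin n))) (k : ℕ) : Prop :=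
  ∃ f g : Fin k → Fin n, StrictMono f ∧ StrictMono g ∧ (∀ s t : Fin k, f s < g t) ∧
    ∀ t, IsArc P (f t) (g t)

/-- Uncolored `k`-nesting. -/
def HasNestingP {n : ℕ} (P : Finpartition (Finset.univ : Finset (Fin n))) (k : ℕ) : Prop :=
  ∃ f g : Fin k → Fin n, StrictMono f ∧ StrictAnti g ∧ (∀ s t : Fin k, f s < g t) ∧
    ∀ t, IsArc P (f t) (g t)

/-- The crossing number of a colored partition: the largest `k` with a `k`-crossing. -/
noncomputable def crNum {n r : ℕ} (Λ : ColoredPartition n r) : ℕ :=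
  sSup {k | 0 < k ∧ HasCrossing Λ k}

noncomputable def neNum {n r : ℕ} (Λ : ColoredPartition n r) : ℕ :=
  sSup {k | 0 < k ∧ HasNesting Λ k}

noncomputable def crNumP {n : ℕ} (P : Finpartition (Finset.univ : Finset (Fin n))) : ℕ :=
  sSup {k | 0 < k ∧ HasCrossingP P k}

noncomputable def neNumP {n : ℕ} (P : Finpartition (Finset.univ : Finset (Fin n))) : ℕ :=
  sSup {k | 0 < k ∧ HasNestingP P k}

/-- A matching: all blocks have at most two elements. -/
def IsMatching {m : ℕ} (P : Finpartition (Finset.univ : Finset (Fin m))) : Prop :=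
  ∀ B ∈ P.parts, B.card ≤ 2

/-- A complete matching: all blocks have exactly two elements. -/
def IsCompleteMatching {m : ℕ} (P : Finpartition (Finset.univ : Finset (Fin m))) : Prop :=
  ∀ B ∈ P.parts, B.card = 2

/-- `i ∈ [n] ↦ 2i ∈ [2n]` (0-based: the element of 1-based value `2(i+1)-1`). -/
def dbl {n : ℕ} (i : Fin n) : Fin (2 * n) := ⟨2 * i.1, by have := i.2; omega⟩

/-- `i ∈ [n] ↦` 0-based index `2i+1` of `[2n]` (1-based value `2(i+1)`). -/
def dbl1 {n : ℕ} (i : Fin n) : Fin (2 * n) := ⟨2 * i.1 + 1, by have := i.2; omega⟩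

/-- Enhanced arcs: arcs of `P` together with loops `(i,i)` at isolated points. -/
def EnhIsArc {n : ℕ} (P : Finpartition (Finset.univ : Finset (Fin n))) (i j : Fin n) : Prop :=
  IsArc P i j ∨ (i = j ∧ i ∈ blockMin P ∧ i ∈ blockMax P)

/-- An `r`-colored enhanced partition of `[n]`. -/
structure EnhColoredPartition (n r : ℕ) where
  P : Finpartition (Finset.univ : Finset (Fin n))
  color : ∀ i j : Fin n, EnhIsArc P i j → Fin r

/-- Enhanced `k`-crossing: same-colored enhanced arcs with
`i₁ < ⋯ < i_k ≤ j₁ < ⋯ < j_k`. -/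
def HasEnhCrossing {n r : ℕ} (Λ : EnhColoredPartition n r) (k : ℕ) : Prop :=
  ∃ (f g : Fin k → Fin n) (c : Fin r),
    StrictMono f ∧ StrictMono g ∧ (∀ s t : Fin k, f s ≤ g t) ∧
    ∀ t, ∃ h : EnhIsArc Λ.P (f t) (g t), Λ.color (f t) (g t) h = c

/-- Enhanced `k`-nesting: same-colored enhanced arcs with
`i₁ < ⋯ < i_k ≤ j_k < ⋯ < j₁`. -/
def HasEnhNesting {n r : ℕ} (Λ : EnhColoredPartition n r) (k : ℕ) : Prop :=
  ∃ (f g : Fin k → Fin n) (c : Fin r),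
    StrictMono f ∧ StrictAnti g ∧ (∀ s t : Fin k, f s ≤ g t) ∧
    ∀ t, ∃ h : EnhIsArc Λ.P (f t) (g t), Λ.color (f t) (g t) h = c

noncomputable def enhCrNum {n r : ℕ} (Λ : EnhColoredPartition n r) : ℕ :=
  sSup {k | 0 < k ∧ HasEnhCrossing Λ k}

noncomputable def enhNeNum {n r : ℕ} (Λ : EnhColoredPartition n r) : ℕ :=
  sSup {k | 0 < k ∧ HasEnhNesting Λ k}

/-- The `(r+1)²` steps: `±e_i` (first summand with a sign), `e_i − e_j` for `i ≠ j`,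
and `r+1` distinct zero steps. -/
def Step (r : ℕ) : Type :=
  (Fin r × Bool) ⊕ ({p : Fin r × Fin r // p.1 ≠ p.2} ⊕ Fin (r + 1))

/-- The displacement vector of a step. -/
def stepVec {r : ℕ} : Step r → Fin r → ℤ
  | Sum.inl (i, b) => fun t => if t = i then (if b then 1 else -1) else 0
  | Sum.inr (Sum.inl p) => fun t => (if t = p.1.1 then 1 else 0) - (if t = p.1.2 then 1 else 0)
  | Sum.inr (Sum.inr _) => fun _ => 0

/-- Position after the first `k` steps of a walk started at the origin. -/
def walkPos {r m : ℕ} (w : Fin m → Step r) (k : ℕ) (t : Fin r) : ℤ :=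
  ∑ i ∈ Finset.univ.filter (fun i : Fin m => i.1 < k), stepVec (w i) t

/-- The walk stays in `ℕ^r` throughout and returns to the origin. -/
def IsClosedWalk {r m : ℕ} (w : Fin m → Step r) : Prop :=
  (∀ k : ℕ, ∀ t : Fin r, 0 ≤ walkPos w k t) ∧ ∀ t : Fin r, walkPos w m t = 0

/-- An `r`-colored permutation of `[n]`. -/
structure ColoredPerm (n r : ℕ) where
  sigma : Equiv.Perm (Fin n)
  cplus : ∀ i : Fin n, i ≤ sigma i → Fin r
  cminus : ∀ i : Fin n, sigma i < i → Fin r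

/-- `k`-crossing of a colored permutation: an enhanced `k`-crossing among same-colored
upper arcs `(i, σ i)`, or an ordinary `k`-crossing among same-colored lower arcs `(σ i, i)`. -/
def PermHasCrossing {n r : ℕ} (S : ColoredPerm n r) (k : ℕ) : Prop :=
  (∃ (f : Fin k → Fin n) (c : Fin r),
      StrictMono f ∧ StrictMono (fun t => S.sigma (f t)) ∧
      (∀ s t : Fin k, f s ≤ S.sigma (f t)) ∧
      ∀ t, ∃ h : f t ≤ S.sigma (f t), S.cplus (f t) h = c) ∨
  (∃ (f : Fin k → Fin n) (c : Fin r),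
      StrictMono (fun t => S.sigma (f t)) ∧ StrictMono f ∧
      (∀ s t : Fin k, S.sigma (f s) < f t) ∧
      ∀ t, ∃ h : S.sigma (f t) < f t, S.cminus (f t) h = c)

/-- `k`-nesting of a colored permutation. -/
def PermHasNesting {n r : ℕ} (S : ColoredPerm n r) (k : ℕ) : Prop :=
  (∃ (f : Fin k → Fin n) (c : Fin r),
      StrictMono f ∧ StrictAnti (fun t => S.sigma (f t)) ∧
      (∀ s t : Fin k, f s ≤ S.sigma (f t)) ∧
      ∀ t, ∃ h : f t ≤ S.sigma (f t), S.cplus (f t) h = c) ∨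
  (∃ (f : Fin k → Fin n) (c : Fin r),
      StrictMono (fun t => S.sigma (f t)) ∧ StrictAnti f ∧
      (∀ s t : Fin k, S.sigma (f s) < f t) ∧
      ∀ t, ∃ h : S.sigma (f t) < f t, S.cminus (f t) h = c)


/-!
Number the points of `[2n]` as `dbl i` (even) and `dbl1 i` (odd), `i ∈ [n]`. An upper arc
`i ≤ σ i` of a permutation becomes the arc `(dbl i, dbl1 (σ i))` of `Λ⁺`, a lower arc
`σ i < i` becomes the arc `(dbl1 (σ i), dbl i)` of `Λ⁻`, each keeping its color. Since
`dbl i < dbl1 j ↔ i ≤ j` and `dbl1 j < dbl i ↔ j < i`, enhanced crossings and nestings of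
upper arcs are exactly the ordinary ones of `Λ⁺`, and those of lower arcs the ones of `Λ⁻`.
Each even point opens an arc of `Λ⁺` or closes one of `Λ⁻`, each odd point closes an arc of
`Λ⁺` or opens one of `Λ⁻`: this is the parity condition. Conversely, under that condition the
partner of `dbl i` in the matching that moves it is an odd point `dbl1 (σ i)`, and this `σ`
is injective, hence a permutation.
-/

lemma Finpartition.ext_part {α : Type*} [DecidableEq α] {s : Finset α} {P Q : Finpartition s}
    (h : ∀ x ∈ s, P.part x = Q.part x) : P = Q := by
  have mem_parts (R : Finpartition s) (B : Finset α) : B ∈ R.parts ↔ ∃ x ∈ s, R.part x = B :=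
    ⟨fun hB => R.part_surjOn hB, fun ⟨x, hx, e⟩ => e ▸ R.part_mem.2 hx⟩
  ext B
  rw [mem_parts, mem_parts]
  exact exists_congr fun x => and_congr_right fun hx => by rw [h x hx]

section Partition
variable {m : ℕ} {P : Finpartition (Finset.univ : Finset (Fin m))}

lemma mem_blockMin_iff {x : Fin m} : x ∈ blockMin P ↔ ∀ y ∈ P.part x, x ≤ y :=
  ⟨fun ⟨_, hB, hx, h⟩ => P.part_eq_of_mem hB hx ▸ h,
    fun h => ⟨_, P.part_mem.2 (mem_univ x), P.mem_part (mem_univ x), h⟩⟩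

lemma mem_blockMax_iff {x : Fin m} : x ∈ blockMax P ↔ ∀ y ∈ P.part x, y ≤ x :=
  ⟨fun ⟨_, hB, hx, h⟩ => P.part_eq_of_mem hB hx ▸ h,
    fun h => ⟨_, P.part_mem.2 (mem_univ x), P.mem_part (mem_univ x), h⟩⟩

lemma isArc_iff {a b : Fin m} :
    IsArc P a b ↔ a < b ∧ b ∈ P.part a ∧ ∀ y ∈ P.part a, a < y → b ≤ y :=
  ⟨fun ⟨hab, _, hB, ha, h⟩ => ⟨hab, P.part_eq_of_mem hB ha ▸ h⟩,
    fun ⟨hab, h⟩ => ⟨hab, _, P.part_mem.2 (mem_univ a), P.mem_part (mem_univ a), h⟩⟩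

end Partition

section Involution
variable {m : ℕ} {τ : Fin m → Fin m}

def involutionSetoid (τ : Fin m → Fin m) (hτ : Function.Involutive τ) : Setoid (Fin m) where
  r x y := x = y ∨ τ x = y
  iseqv :=
    { refl := fun _ => Or.inl rfl
      symm := by rintro x _ (rfl | rfl) <;> simp [hτ x]
      trans := by rintro x _ _ (rfl | rfl) (rfl | rfl) <;> simp [hτ x] }

instance (hτ : Function.Involutive τ) : DecidableRel (involutionSetoid τ hτ).r :=
  fun x y => inferInstanceAs (Decidable (x = y ∨ τ x = y))

def matchingOfInvolution (τ : Fin m → Fin m) (hτ : Function.Involutive τ) :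
    Finpartition (Finset.univ : Finset (Fin m)) :=
  Finpartition.ofSetoid (involutionSetoid τ hτ)

variable {hτ : Function.Involutive τ}

lemma part_matchingOfInvolution (x : Fin m) :
    (matchingOfInvolution τ hτ).part x = {x, τ x} := by
  ext y
  rw [matchingOfInvolution, Finpartition.mem_part_ofSetoid_iff_rel]
  change x = y ∨ τ x = y ↔ _
  simp [eq_comm]

lemma isMatching_matchingOfInvolution : IsMatching (matchingOfInvolution τ hτ) := by
  intro B hB
  obtain ⟨x, -, rfl⟩ := (matchingOfInvolution τ hτ).part_surjOn hB
  rw [part_matchingOfInvolution]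
  exact card_le_two

lemma isArc_matchingOfInvolution_iff {a b : Fin m} :
    IsArc (matchingOfInvolution τ hτ) a b ↔ a < b ∧ τ a = b := by
  simp only [isArc_iff, part_matchingOfInvolution, mem_insert, mem_singleton,
    forall_eq_or_imp, forall_eq, lt_irrefl, IsEmpty.forall_iff, true_and]
  constructor
  · rintro ⟨hab, rfl | rfl, -⟩
    exacts [absurd hab (lt_irrefl _), ⟨hab, rfl⟩]
  · rintro ⟨hab, rfl⟩
    exact ⟨hab, Or.inr rfl, fun _ => le_rfl⟩

lemma blockMin_diff_blockMax_matchingOfInvolution :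
    blockMin (matchingOfInvolution τ hτ) \ blockMax (matchingOfInvolution τ hτ) =
      {x | x < τ x} := by
  ext x
  simp only [Set.mem_sdiff, mem_blockMin_iff, mem_blockMax_iff, part_matchingOfInvolution,
    mem_insert, mem_singleton, forall_eq_or_imp, forall_eq, le_refl, true_and,
    Set.mem_ofPred_eq, lt_iff_le_not_ge]

lemma blockMax_diff_blockMin_matchingOfInvolution :
    blockMax (matchingOfInvolution τ hτ) \ blockMin (matchingOfInvolution τ hτ) =
      {x | τ x < x} := by
  ext x
  simp only [Set.mem_sdiff, mem_blockMin_iff, mem_blockMax_iff, part_matchingOfInvolution,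
    mem_insert, mem_singleton, forall_eq_or_imp, forall_eq, le_refl, true_and,
    Set.mem_ofPred_eq, lt_iff_le_not_ge]

end Involution

section Partner
variable {m : ℕ} {P : Finpartition (Finset.univ : Finset (Fin m))}

noncomputable def partner (P : Finpartition (Finset.univ : Finset (Fin m))) (x : Fin m) :
    Fin m :=
  if h : ∃ y ∈ P.part x, y ≠ x then h.choose else x

lemma part_eq_pair_partner (hP : IsMatching P) (x : Fin m) : P.part x = {x, partner P x} := by
  have hx := P.mem_part (mem_univ x)
  by_cases h : ∃ y ∈ P.part x, y ≠ x
  · rw [partner, dif_pos h]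
    obtain ⟨hy, hyx⟩ := h.choose_spec
    refine (eq_of_subset_of_card_le ?_ ?_).symm
    · simp [insert_subset_iff, hx, hy]
    · rw [card_pair hyx.symm]
      exact hP _ (P.part_mem.2 (mem_univ x))
  · push Not at h
    rw [partner, dif_neg (by simpa using h), pair_eq_singleton]
    exact eq_singleton_iff_unique_mem.2 ⟨hx, h⟩

lemma involutive_partner (hP : IsMatching P) : Function.Involutive (partner P) := by
  intro x
  have hmem : partner P x ∈ P.part x := by rw [part_eq_pair_partner hP]; simp
  have h := part_eq_pair_partner hP (partner P x)
  rw [P.part_eq_of_mem (P.part_mem.2 (mem_univ x)) hmem, part_eq_pair_partner hP x] at h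
  have hx : x ∈ ({partner P x, partner P (partner P x)} : Finset (Fin m)) :=
    h ▸ mem_insert_self _ _
  rcases mem_insert.1 hx with e | e
  · rw [← e, ← e]
  · exact (mem_singleton.1 e).symm

lemma matchingOfInvolution_partner (hP : IsMatching P) :
    matchingOfInvolution (partner P) (involutive_partner hP) = P :=
  Finpartition.ext_part fun x _ => by rw [part_matchingOfInvolution, part_eq_pair_partner hP]

lemma matchingOfInvolution_eq_of_eq_partner {τ : Fin m → Fin m} {hτ : Function.Involutive τ}
    (hP : IsMatching P) (h : τ = partner P) : matchingOfInvolution τ hτ = P := by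
  subst h
  exact matchingOfInvolution_partner hP

lemma partner_matchingOfInvolution {τ : Fin m → Fin m} (hτ : Function.Involutive τ) :
    partner (matchingOfInvolution τ hτ) = τ := by
  funext x
  rw [partner]
  split_ifs with h
  · obtain ⟨hy, hyx⟩ := h.choose_spec
    generalize h.choose = y at hy hyx ⊢
    rw [part_matchingOfInvolution, mem_insert, mem_singleton] at hy
    exact hy.resolve_left hyx
  · push Not at h
    exact (h (τ x) (by simp [part_matchingOfInvolution])).symm

lemma isArc_iff_partner (hP : IsMatching P) {a b : Fin m} :
    IsArc P a b ↔ a < b ∧ partner P a = b := by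
  conv_lhs => rw [← matchingOfInvolution_partner hP]
  exact isArc_matchingOfInvolution_iff

lemma blockMin_diff_blockMax_of_isMatching (hP : IsMatching P) :
    blockMin P \ blockMax P = {x | x < partner P x} := by
  conv_lhs => rw [← matchingOfInvolution_partner hP]
  exact blockMin_diff_blockMax_matchingOfInvolution

lemma blockMax_diff_blockMin_of_isMatching (hP : IsMatching P) :
    blockMax P \ blockMin P = {x | partner P x < x} := by
  conv_lhs => rw [← matchingOfInvolution_partner hP]
  exact blockMax_diff_blockMin_matchingOfInvolution

end Partner

section Doubling
variable {n : ℕ}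

def half (x : Fin (2 * n)) : Fin n := ⟨x.1 / 2, by omega⟩

@[simp] lemma half_dbl (i : Fin n) : half (dbl i) = i := Fin.ext (by simp [half, dbl])

@[simp] lemma half_dbl1 (i : Fin n) : half (dbl1 i) = i := Fin.ext (by simp [half, dbl1]; omega)

@[simp] lemma val_dbl_mod_two (i : Fin n) : (dbl i).1 % 2 = 0 := by simp [dbl]

@[simp] lemma val_dbl1_mod_two (i : Fin n) : (dbl1 i).1 % 2 = 1 := by simp [dbl1]

lemma dbl_half {x : Fin (2 * n)} (h : x.1 % 2 = 0) : dbl (half x) = x :=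
  Fin.ext (by simp [dbl, half]; omega)

lemma dbl1_half {x : Fin (2 * n)} (h : x.1 % 2 = 1) : dbl1 (half x) = x :=
  Fin.ext (by simp [dbl1, half]; omega)

lemma dbl_or_dbl1_apply (σ : Equiv.Perm (Fin n)) (x : Fin (2 * n)) :
    (∃ i, dbl i = x) ∨ ∃ i, dbl1 (σ i) = x := by
  rcases Nat.mod_two_eq_zero_or_one x.1 with h | h
  · exact Or.inl ⟨_, dbl_half h⟩
  · exact Or.inr ⟨σ.symm (half x), by rw [σ.apply_symm_apply, dbl1_half h]⟩

lemma strictMono_dbl : StrictMono (dbl : Fin n → Fin (2 * n)) :=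
  fun i j h => by simp only [dbl, Fin.mk_lt_mk]; omega

lemma strictMono_dbl1 : StrictMono (dbl1 : Fin n → Fin (2 * n)) :=
  fun i j h => by simp only [dbl1, Fin.mk_lt_mk]; omega

@[simp] lemma dbl_lt_dbl1_iff {i j : Fin n} : dbl i < dbl1 j ↔ i ≤ j := by
  simp only [dbl, dbl1, Fin.mk_lt_mk, Fin.le_def]; omega

@[simp] lemma dbl1_lt_dbl_iff {i j : Fin n} : dbl1 i < dbl j ↔ i < j := by
  simp only [dbl, dbl1, Fin.lt_def]; omega

lemma StrictMono.strictMono_comp_iff {α β γ : Type*} [LinearOrder α] [Preorder β] [Preorder γ]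
    {e : α → β} (he : StrictMono e) {f : γ → α} : StrictMono (e ∘ f) ↔ StrictMono f :=
  ⟨fun h _ _ hab => he.lt_iff_lt.1 (h hab), he.comp⟩

lemma StrictMono.strictAnti_comp_iff {α β γ : Type*} [LinearOrder α] [Preorder β] [Preorder γ]
    {e : α → β} (he : StrictMono e) {f : γ → α} : StrictAnti (e ∘ f) ↔ StrictAnti f :=
  ⟨fun h _ _ hab => he.lt_iff_lt.1 (h hab), he.comp_strictAnti⟩

end Doubling

section Pairing
variable {n : ℕ} (σ : Equiv.Perm (Fin n)) (p : Fin n → Prop) [DecidablePred p]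

/-- The involution of `[2n]` exchanging `dbl i` and `dbl1 (σ i)` for every `i` with `p i`. -/
def pairing (x : Fin (2 * n)) : Fin (2 * n) :=
  if x.1 % 2 = 0 then (if p (half x) then dbl1 (σ (half x)) else x)
  else (if p (σ.symm (half x)) then dbl (σ.symm (half x)) else x)

lemma pairing_dbl (i : Fin n) : pairing σ p (dbl i) = if p i then dbl1 (σ i) else dbl i := by
  simp [pairing]

lemma pairing_dbl1 (i : Fin n) :
    pairing σ p (dbl1 (σ i)) = if p i then dbl i else dbl1 (σ i) := by
  simp [pairing]

lemma involutive_pairing : Function.Involutive (pairing σ p) := by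
  intro x
  obtain ⟨i, rfl⟩ | ⟨i, rfl⟩ := dbl_or_dbl1_apply σ x <;>
    by_cases hp : p i <;> simp [pairing_dbl, pairing_dbl1, hp]

variable {σ p}

lemma isArc_pairing_iff {a b : Fin (2 * n)} :
    IsArc (matchingOfInvolution (pairing σ p) (involutive_pairing σ p)) a b ↔
      ∃ i, p i ∧ (i ≤ σ i ∧ a = dbl i ∧ b = dbl1 (σ i) ∨
        σ i < i ∧ a = dbl1 (σ i) ∧ b = dbl i) := by
  rw [isArc_matchingOfInvolution_iff]
  constructor
  · rintro ⟨hab, rfl⟩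
    obtain ⟨i, rfl⟩ | ⟨i, rfl⟩ := dbl_or_dbl1_apply σ a
    · rw [pairing_dbl] at hab ⊢
      split_ifs at hab ⊢ with hp
      · exact ⟨i, hp, Or.inl ⟨dbl_lt_dbl1_iff.1 hab, rfl, rfl⟩⟩
      · exact absurd hab (lt_irrefl _)
    · rw [pairing_dbl1] at hab ⊢
      split_ifs at hab ⊢ with hp
      · exact ⟨i, hp, Or.inr ⟨dbl1_lt_dbl_iff.1 hab, rfl, rfl⟩⟩
      · exact absurd hab (lt_irrefl _)
  · rintro ⟨i, hp, ⟨hi, rfl, rfl⟩ | ⟨hi, rfl, rfl⟩⟩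
    · simp [pairing_dbl, hp, hi]
    · simp [pairing_dbl1, hp, hi]

lemma dbl_lt_pairing_iff {i : Fin n} : dbl i < pairing σ p (dbl i) ↔ p i ∧ i ≤ σ i := by
  rw [pairing_dbl]; split_ifs <;> simp [*]

lemma pairing_lt_dbl_iff {i : Fin n} : pairing σ p (dbl i) < dbl i ↔ p i ∧ σ i < i := by
  rw [pairing_dbl]; split_ifs <;> simp [*]

lemma dbl1_lt_pairing_iff {i : Fin n} :
    dbl1 (σ i) < pairing σ p (dbl1 (σ i)) ↔ p i ∧ σ i < i := by
  rw [pairing_dbl1]; split_ifs <;> simp [*]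

lemma pairing_lt_dbl1_iff {i : Fin n} :
    pairing σ p (dbl1 (σ i)) < dbl1 (σ i) ↔ p i ∧ i ≤ σ i := by
  rw [pairing_dbl1]; split_ifs <;> simp [*]

lemma eq_pairing_of {τ : Fin (2 * n) → Fin (2 * n)} (hτ : Function.Involutive τ)
    (hdbl : ∀ i, τ (dbl i) = if p i then dbl1 (σ i) else dbl i)
    (hfix : ∀ i, ¬p i → τ (dbl1 (σ i)) = dbl1 (σ i)) : τ = pairing σ p := by
  funext x
  obtain ⟨i, rfl⟩ | ⟨i, rfl⟩ := dbl_or_dbl1_apply σ x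
  · rw [hdbl, pairing_dbl]
  · rw [pairing_dbl1]
    split_ifs with hp
    · rw [← hτ (dbl i), hdbl, if_pos hp]
    · exact hfix i hp

end Pairing

/-- With `τp, τm` the partner maps of two matchings, `{x | x < τ x}` is `blockMin \ blockMax`
and `{x | τ x < x}` is `blockMax \ blockMin`, so these are the parity conditions of the
theorem. -/
structure IsPermPair {n : ℕ} (τp τm : Fin (2 * n) → Fin (2 * n)) : Prop where
  involutive_left : Function.Involutive τp
  involutive_right : Function.Involutive τm
  even_eq : {x : Fin (2 * n) | x.1 % 2 = 0} = {x | x < τp x} ∪ {x | τm x < x}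
  disjoint_even : Disjoint {x | x < τp x} {x | τm x < x}
  odd_eq : {x : Fin (2 * n) | x.1 % 2 = 1} = {x | τp x < x} ∪ {x | x < τm x}
  disjoint_odd : Disjoint {x | τp x < x} {x | x < τm x}

lemma isPermPair_pairing {n : ℕ} (σ : Equiv.Perm (Fin n)) :
    IsPermPair (pairing σ (fun i => i ≤ σ i)) (pairing σ (fun i => σ i < i)) := by
  refine ⟨involutive_pairing _ _, involutive_pairing _ _, Set.ext fun x => ?_,
    Set.disjoint_left.2 fun x => ?_, Set.ext fun x => ?_, Set.disjoint_left.2 fun x => ?_⟩ <;>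
  obtain ⟨i, rfl⟩ | ⟨i, rfl⟩ := dbl_or_dbl1_apply σ x <;>
  simp [dbl_lt_pairing_iff, pairing_lt_dbl_iff, dbl1_lt_pairing_iff, pairing_lt_dbl1_iff,
    le_or_gt]

/-- `dbl i` opens an arc of `τp` or closes an arc of `τm`, and the other end of that arc is
`dbl1 (permFun τp τm i)`. -/
def permFun {n : ℕ} (τp τm : Fin (2 * n) → Fin (2 * n)) (i : Fin n) : Fin n :=
  half (if dbl i < τp (dbl i) then τp (dbl i) else τm (dbl i))

namespace IsPermPair
variable {n : ℕ} {τp τm : Fin (2 * n) → Fin (2 * n)} (h : IsPermPair τp τm) {x : Fin (2 * n)}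
include h

lemma even_of_lt_left (hx : x < τp x) : x.1 % 2 = 0 :=
  (Set.ext_iff.1 h.even_eq x).2 (Or.inl hx)

lemma even_of_right_lt (hx : τm x < x) : x.1 % 2 = 0 :=
  (Set.ext_iff.1 h.even_eq x).2 (Or.inr hx)

lemma odd_of_left_lt (hx : τp x < x) : x.1 % 2 = 1 :=
  (Set.ext_iff.1 h.odd_eq x).2 (Or.inl hx)

lemma odd_of_lt_right (hx : x < τm x) : x.1 % 2 = 1 :=
  (Set.ext_iff.1 h.odd_eq x).2 (Or.inr hx)

lemma left_eq_of_right_lt (hx : τm x < x) : τp x = x := by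
  refine le_antisymm (not_lt.1 fun h' => Set.disjoint_left.1 h.disjoint_even h' hx)
    (not_lt.1 fun h' => ?_)
  have := h.odd_of_left_lt h'; have := h.even_of_right_lt hx; omega

lemma right_eq_of_lt_left (hx : x < τp x) : τm x = x := by
  refine le_antisymm (not_lt.1 fun h' => ?_)
    (not_lt.1 fun h' => Set.disjoint_left.1 h.disjoint_even hx h')
  have := h.odd_of_lt_right h'; have := h.even_of_lt_left hx; omega

lemma left_eq_of_lt_right (hx : x < τm x) : τp x = x := by
  refine le_antisymm (not_lt.1 fun h' => ?_)
    (not_lt.1 fun h' => Set.disjoint_left.1 h.disjoint_odd h' hx)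
  have := h.even_of_lt_left h'; have := h.odd_of_lt_right hx; omega

lemma right_eq_of_left_lt (hx : τp x < x) : τm x = x := by
  refine le_antisymm (not_lt.1 fun h' => Set.disjoint_left.1 h.disjoint_odd hx h')
    (not_lt.1 fun h' => ?_)
  have := h.even_of_right_lt h'; have := h.odd_of_left_lt hx; omega

lemma permFun_cases (i : Fin n) :
    (τp (dbl i) = dbl1 (permFun τp τm i) ∧ i ≤ permFun τp τm i ∧ τm (dbl i) = dbl i) ∨
      (τm (dbl i) = dbl1 (permFun τp τm i) ∧ permFun τp τm i < i ∧ τp (dbl i) = dbl i) := by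
  by_cases hi : dbl i < τp (dbl i)
  · have hodd := h.odd_of_left_lt (x := τp (dbl i)) (by rwa [h.involutive_left])
    have e : τp (dbl i) = dbl1 (permFun τp τm i) := by rw [permFun, if_pos hi, dbl1_half hodd]
    exact Or.inl ⟨e, dbl_lt_dbl1_iff.1 (e ▸ hi), h.right_eq_of_lt_left hi⟩
  · have hlt : τm (dbl i) < dbl i :=
      ((Set.ext_iff.1 h.even_eq (dbl i)).1 (val_dbl_mod_two i)).resolve_left hi
    have hodd := h.odd_of_lt_right (x := τm (dbl i)) (by rwa [h.involutive_right])
    have e : τm (dbl i) = dbl1 (permFun τp τm i) := by rw [permFun, if_neg hi, dbl1_half hodd]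
    exact Or.inr ⟨e, dbl1_lt_dbl_iff.1 (e ▸ hlt), h.left_eq_of_right_lt hlt⟩

lemma injective_permFun : Function.Injective (permFun τp τm) := by
  let back (j : Fin n) : Fin n :=
    half (if τp (dbl1 j) < dbl1 j then τp (dbl1 j) else τm (dbl1 j))
  have hback : ∀ i, back (permFun τp τm i) = i := by
    intro i
    rcases h.permFun_cases i with ⟨e, hi, -⟩ | ⟨e, hi, -⟩
    · have e' : τp (dbl1 (permFun τp τm i)) = dbl i := by rw [← e, h.involutive_left]
      simp only [back, e', dbl_lt_dbl1_iff.2 hi, if_true, half_dbl]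
    · have e' : τm (dbl1 (permFun τp τm i)) = dbl i := by rw [← e, h.involutive_right]
      have hfix := h.left_eq_of_lt_right (x := dbl1 (permFun τp τm i)) (by simpa [e'])
      simp only [back, hfix, lt_irrefl, if_false, e', half_dbl]
  exact fun i j hij => by rw [← hback i, ← hback j, hij]

noncomputable def perm : Equiv.Perm (Fin n) :=
  Equiv.ofBijective (permFun τp τm) (Finite.injective_iff_bijective.1 h.injective_permFun)

lemma perm_apply (i : Fin n) : h.perm i = permFun τp τm i := rfl

lemma pairing_perm_left : pairing h.perm (fun i => i ≤ h.perm i) = τp := by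
  refine (eq_pairing_of h.involutive_left (fun i => ?_) (fun i hi => ?_)).symm
  all_goals rcases h.permFun_cases i with ⟨e, hle, -⟩ | ⟨e, hlt, hfix⟩
  · simp [perm_apply, e, hle]
  · simp [perm_apply, hfix, not_le.2 hlt]
  · exact absurd hle hi
  · have e' : τm (dbl1 (permFun τp τm i)) = dbl i := by rw [← e, h.involutive_right]
    rw [perm_apply]
    exact h.left_eq_of_lt_right (by rw [e']; exact dbl1_lt_dbl_iff.2 hlt)

lemma pairing_perm_right : pairing h.perm (fun i => h.perm i < i) = τm := by
  refine (eq_pairing_of h.involutive_right (fun i => ?_) (fun i hi => ?_)).symm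
  all_goals rcases h.permFun_cases i with ⟨e, hle, hfix⟩ | ⟨e, hlt, -⟩
  · simp [perm_apply, hfix, not_lt.2 hle]
  · simp [perm_apply, e, hlt]
  · have e' : τp (dbl1 (permFun τp τm i)) = dbl i := by rw [← e, h.involutive_left]
    rw [perm_apply]
    exact h.right_eq_of_left_lt (by rw [e']; exact dbl_lt_dbl1_iff.2 hle)
  · exact absurd hlt hi

end IsPermPair

lemma permFun_pairing {n : ℕ} (σ : Equiv.Perm (Fin n)) :
    permFun (pairing σ (fun i => i ≤ σ i)) (pairing σ (fun i => σ i < i)) = σ := by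
  funext i
  by_cases hi : i ≤ σ i
  · simp [permFun, pairing_dbl, hi]
  · simp [permFun, pairing_dbl, hi, not_le.1 hi]

namespace ColoredPartition
variable {m r : ℕ}

lemma color_congr (Λ : ColoredPartition m r) {a a' b b' : Fin m} (ea : a = a') (eb : b = b')
    (h : IsArc Λ.P a b) (h' : IsArc Λ.P a' b') : Λ.color a b h = Λ.color a' b' h' := by
  subst ea eb; rfl

lemma ext {Λ Λ' : ColoredPartition m r} (hP : Λ.P = Λ'.P)
    (hcolor : ∀ a b (h : IsArc Λ.P a b) (h' : IsArc Λ'.P a b),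
      Λ.color a b h = Λ'.color a b h') : Λ = Λ' := by
  obtain ⟨P, c⟩ := Λ
  obtain ⟨P', c'⟩ := Λ'
  subst hP
  congr
  funext a b h
  exact hcolor a b h h

end ColoredPartition

namespace ColoredPerm
variable {n r : ℕ}

lemma cplus_congr (S : ColoredPerm n r) {i i' : Fin n} (e : i = i') (h : i ≤ S.sigma i)
    (h' : i' ≤ S.sigma i') : S.cplus i h = S.cplus i' h' := by
  subst e; rfl

lemma cminus_congr (S : ColoredPerm n r) {i i' : Fin n} (e : i = i') (h : S.sigma i < i)
    (h' : S.sigma i' < i') : S.cminus i h = S.cminus i' h' := by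
  subst e; rfl

lemma ext {S S' : ColoredPerm n r} (hσ : S.sigma = S'.sigma)
    (hplus : ∀ i (h : i ≤ S.sigma i) (h' : i ≤ S'.sigma i), S.cplus i h = S'.cplus i h')
    (hminus : ∀ i (h : S.sigma i < i) (h' : S'.sigma i < i), S.cminus i h = S'.cminus i h') :
    S = S' := by
  obtain ⟨σ, cp, cm⟩ := S
  obtain ⟨σ', cp', cm'⟩ := S'
  subst hσ
  congr
  · funext i h; exact hplus i h h
  · funext i h; exact hminus i h h

variable (S : ColoredPerm n r)

lemma isArc_upper_iff {a b : Fin (2 * n)} :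
    IsArc (matchingOfInvolution _ (involutive_pairing S.sigma (fun i => i ≤ S.sigma i))) a b ↔
      ∃ i, i ≤ S.sigma i ∧ a = dbl i ∧ b = dbl1 (S.sigma i) := by
  rw [isArc_pairing_iff]
  refine exists_congr fun i => ⟨?_, fun ⟨hi, hab⟩ => ⟨hi, Or.inl ⟨hi, hab⟩⟩⟩
  rintro ⟨hi, h | ⟨hlt, -⟩⟩
  exacts [h, absurd hi (not_le.2 hlt)]

lemma isArc_lower_iff {a b : Fin (2 * n)} :
    IsArc (matchingOfInvolution _ (involutive_pairing S.sigma (fun i => S.sigma i < i))) a b ↔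
      ∃ i, S.sigma i < i ∧ a = dbl1 (S.sigma i) ∧ b = dbl i := by
  rw [isArc_pairing_iff]
  refine exists_congr fun i => ⟨?_, fun ⟨hi, hab⟩ => ⟨hi, Or.inr ⟨hi, hab⟩⟩⟩
  rintro ⟨hi, ⟨hle, -⟩ | h⟩
  exacts [absurd hi (not_lt.2 hle), h]

def upper : ColoredPartition (2 * n) r where
  P := matchingOfInvolution _ (involutive_pairing S.sigma (fun i => i ≤ S.sigma i))
  color a _ h := S.cplus (half a) (by obtain ⟨i, hi, rfl, -⟩ := S.isArc_upper_iff.1 h; simpa)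

def lower : ColoredPartition (2 * n) r where
  P := matchingOfInvolution _ (involutive_pairing S.sigma (fun i => S.sigma i < i))
  color _ b h := S.cminus (half b) (by obtain ⟨i, hi, -, rfl⟩ := S.isArc_lower_iff.1 h; simpa)

lemma partner_upper : partner S.upper.P = pairing S.sigma (fun i => i ≤ S.sigma i) :=
  partner_matchingOfInvolution _

lemma partner_lower : partner S.lower.P = pairing S.sigma (fun i => S.sigma i < i) :=
  partner_matchingOfInvolution _

lemma upper_arcs_iff {k : ℕ} {f g : Fin k → Fin (2 * n)} {c : Fin r} :
    (∀ t, ∃ h : IsArc S.upper.P (f t) (g t), S.upper.color (f t) (g t) h = c) ↔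
      ∃ F : Fin k → Fin n, f = dbl ∘ F ∧ g = dbl1 ∘ S.sigma ∘ F ∧
        ∀ t, ∃ h : F t ≤ S.sigma (F t), S.cplus (F t) h = c := by
  constructor
  · intro H
    choose F hF hf hg using fun t => S.isArc_upper_iff.1 (H t).1
    refine ⟨F, funext hf, funext hg, fun t => ⟨hF t, ?_⟩⟩
    obtain ⟨h, hc⟩ := H t
    exact (S.cplus_congr (by rw [hf, half_dbl]) _ _).symm.trans hc
  · rintro ⟨F, rfl, rfl, H⟩ t
    obtain ⟨h, hc⟩ := H t
    exact ⟨S.isArc_upper_iff.2 ⟨F t, h, rfl, rfl⟩, (S.cplus_congr (half_dbl _) _ _).trans hc⟩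

lemma lower_arcs_iff {k : ℕ} {f g : Fin k → Fin (2 * n)} {c : Fin r} :
    (∀ t, ∃ h : IsArc S.lower.P (f t) (g t), S.lower.color (f t) (g t) h = c) ↔
      ∃ F : Fin k → Fin n, f = dbl1 ∘ S.sigma ∘ F ∧ g = dbl ∘ F ∧
        ∀ t, ∃ h : S.sigma (F t) < F t, S.cminus (F t) h = c := by
  constructor
  · intro H
    choose F hF hf hg using fun t => S.isArc_lower_iff.1 (H t).1
    refine ⟨F, funext hf, funext hg, fun t => ⟨hF t, ?_⟩⟩
    obtain ⟨h, hc⟩ := H t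
    exact (S.cminus_congr (by rw [hg, half_dbl]) _ _).symm.trans hc
  · rintro ⟨F, rfl, rfl, H⟩ t
    obtain ⟨h, hc⟩ := H t
    exact ⟨S.isArc_lower_iff.2 ⟨F t, h, rfl, rfl⟩, (S.cminus_congr (half_dbl _) _ _).trans hc⟩

variable {k : ℕ}

lemma hasCrossing_upper_iff :
    HasCrossing S.upper k ↔ ∃ (f : Fin k → Fin n) (c : Fin r),
      StrictMono f ∧ StrictMono (fun t => S.sigma (f t)) ∧
      (∀ s t : Fin k, f s ≤ S.sigma (f t)) ∧
      ∀ t, ∃ h : f t ≤ S.sigma (f t), S.cplus (f t) h = c := by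
  constructor
  · rintro ⟨f, g, c, hf, hg, hfg, harcs⟩
    obtain ⟨F, rfl, rfl, hF⟩ := S.upper_arcs_iff.1 harcs
    exact ⟨F, c, strictMono_dbl.strictMono_comp_iff.1 hf,
      strictMono_dbl1.strictMono_comp_iff.1 hg, fun s t => dbl_lt_dbl1_iff.1 (hfg s t), hF⟩
  · rintro ⟨F, c, hF, hσF, hle, hcolor⟩
    exact ⟨_, _, c, strictMono_dbl.comp hF, strictMono_dbl1.comp hσF,
      fun s t => dbl_lt_dbl1_iff.2 (hle s t), S.upper_arcs_iff.2 ⟨F, rfl, rfl, hcolor⟩⟩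

lemma hasNesting_upper_iff :
    HasNesting S.upper k ↔ ∃ (f : Fin k → Fin n) (c : Fin r),
      StrictMono f ∧ StrictAnti (fun t => S.sigma (f t)) ∧
      (∀ s t : Fin k, f s ≤ S.sigma (f t)) ∧
      ∀ t, ∃ h : f t ≤ S.sigma (f t), S.cplus (f t) h = c := by
  constructor
  · rintro ⟨f, g, c, hf, hg, hfg, harcs⟩
    obtain ⟨F, rfl, rfl, hF⟩ := S.upper_arcs_iff.1 harcs
    exact ⟨F, c, strictMono_dbl.strictMono_comp_iff.1 hf,
      strictMono_dbl1.strictAnti_comp_iff.1 hg, fun s t => dbl_lt_dbl1_iff.1 (hfg s t), hF⟩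
  · rintro ⟨F, c, hF, hσF, hle, hcolor⟩
    exact ⟨_, _, c, strictMono_dbl.comp hF, strictMono_dbl1.comp_strictAnti hσF,
      fun s t => dbl_lt_dbl1_iff.2 (hle s t), S.upper_arcs_iff.2 ⟨F, rfl, rfl, hcolor⟩⟩

lemma hasCrossing_lower_iff :
    HasCrossing S.lower k ↔ ∃ (f : Fin k → Fin n) (c : Fin r),
      StrictMono (fun t => S.sigma (f t)) ∧ StrictMono f ∧
      (∀ s t : Fin k, S.sigma (f s) < f t) ∧
      ∀ t, ∃ h : S.sigma (f t) < f t, S.cminus (f t) h = c := by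
  constructor
  · rintro ⟨f, g, c, hf, hg, hfg, harcs⟩
    obtain ⟨F, rfl, rfl, hF⟩ := S.lower_arcs_iff.1 harcs
    exact ⟨F, c, strictMono_dbl1.strictMono_comp_iff.1 hf,
      strictMono_dbl.strictMono_comp_iff.1 hg, fun s t => dbl1_lt_dbl_iff.1 (hfg s t), hF⟩
  · rintro ⟨F, c, hσF, hF, hlt, hcolor⟩
    exact ⟨_, _, c, strictMono_dbl1.comp hσF, strictMono_dbl.comp hF,
      fun s t => dbl1_lt_dbl_iff.2 (hlt s t), S.lower_arcs_iff.2 ⟨F, rfl, rfl, hcolor⟩⟩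

lemma hasNesting_lower_iff :
    HasNesting S.lower k ↔ ∃ (f : Fin k → Fin n) (c : Fin r),
      StrictMono (fun t => S.sigma (f t)) ∧ StrictAnti f ∧
      (∀ s t : Fin k, S.sigma (f s) < f t) ∧
      ∀ t, ∃ h : S.sigma (f t) < f t, S.cminus (f t) h = c := by
  constructor
  · rintro ⟨f, g, c, hf, hg, hfg, harcs⟩
    obtain ⟨F, rfl, rfl, hF⟩ := S.lower_arcs_iff.1 harcs
    exact ⟨F, c, strictMono_dbl1.strictMono_comp_iff.1 hf,
      strictMono_dbl.strictAnti_comp_iff.1 hg, fun s t => dbl1_lt_dbl_iff.1 (hfg s t), hF⟩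
  · rintro ⟨F, c, hσF, hF, hlt, hcolor⟩
    exact ⟨_, _, c, strictMono_dbl1.comp hσF, strictMono_dbl.comp_strictAnti hF,
      fun s t => dbl1_lt_dbl_iff.2 (hlt s t), S.lower_arcs_iff.2 ⟨F, rfl, rfl, hcolor⟩⟩

lemma permHasCrossing_iff :
    PermHasCrossing S k ↔ HasCrossing S.upper k ∨ HasCrossing S.lower k := by
  rw [PermHasCrossing, hasCrossing_upper_iff, hasCrossing_lower_iff]

lemma permHasNesting_iff :
    PermHasNesting S k ↔ HasNesting S.upper k ∨ HasNesting S.lower k := by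
  rw [PermHasNesting, hasNesting_upper_iff, hasNesting_lower_iff]

end ColoredPerm

section Backward
variable {n r : ℕ} {Pp Pm : Finpartition (Finset.univ : Finset (Fin (2 * n)))}

lemma IsPermPair.isArc_left (hp : IsMatching Pp) (h : IsPermPair (partner Pp) (partner Pm))
    {i : Fin n} (hi : i ≤ h.perm i) : IsArc Pp (dbl i) (dbl1 (h.perm i)) := by
  rw [isArc_iff_partner hp, ← congrFun h.pairing_perm_left (dbl i), pairing_dbl, if_pos hi]
  exact ⟨dbl_lt_dbl1_iff.2 hi, rfl⟩

lemma IsPermPair.isArc_right (hm : IsMatching Pm) (h : IsPermPair (partner Pp) (partner Pm))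
    {i : Fin n} (hi : h.perm i < i) : IsArc Pm (dbl1 (h.perm i)) (dbl i) := by
  have e : partner Pm (dbl i) = dbl1 (h.perm i) := by
    rw [← congrFun h.pairing_perm_right (dbl i), pairing_dbl, if_pos hi]
  rw [isArc_iff_partner hm, ← e, h.involutive_right]
  exact ⟨e ▸ dbl1_lt_dbl_iff.2 hi, rfl⟩

lemma isPermPair_partner_iff (hp : IsMatching Pp) (hm : IsMatching Pm) :
    IsPermPair (partner Pp) (partner Pm) ↔
      {x : Fin (2 * n) | x.1 % 2 = 0} =
        (blockMin Pp \ blockMax Pp) ∪ (blockMax Pm \ blockMin Pm) ∧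
      Disjoint (blockMin Pp \ blockMax Pp) (blockMax Pm \ blockMin Pm) ∧
      {x : Fin (2 * n) | x.1 % 2 = 1} =
        (blockMax Pp \ blockMin Pp) ∪ (blockMin Pm \ blockMax Pm) ∧
      Disjoint (blockMax Pp \ blockMin Pp) (blockMin Pm \ blockMax Pm) := by
  simp only [blockMin_diff_blockMax_of_isMatching, blockMax_diff_blockMin_of_isMatching, hp, hm]
  exact ⟨fun ⟨_, _, h₁, h₂, h₃, h₄⟩ => ⟨h₁, h₂, h₃, h₄⟩,
    fun ⟨h₁, h₂, h₃, h₄⟩ => ⟨involutive_partner hp, involutive_partner hm, h₁, h₂, h₃, h₄⟩⟩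

noncomputable def ColoredPerm.ofPair (Λp Λm : ColoredPartition (2 * n) r)
    (hp : IsMatching Λp.P) (hm : IsMatching Λm.P)
    (h : IsPermPair (partner Λp.P) (partner Λm.P)) : ColoredPerm n r where
  sigma := h.perm
  cplus i hi := Λp.color (dbl i) (dbl1 (h.perm i)) (h.isArc_left hp hi)
  cminus i hi := Λm.color (dbl1 (h.perm i)) (dbl i) (h.isArc_right hm hi)

variable {Λp Λm : ColoredPartition (2 * n) r} (hp : IsMatching Λp.P) (hm : IsMatching Λm.P)
  (h : IsPermPair (partner Λp.P) (partner Λm.P))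

lemma ColoredPerm.upper_ofPair : (ColoredPerm.ofPair Λp Λm hp hm h).upper = Λp := by
  refine ColoredPartition.ext (matchingOfInvolution_eq_of_eq_partner hp h.pairing_perm_left)
    fun a b hab _ => ?_
  obtain ⟨i, -, rfl, rfl⟩ := ColoredPerm.isArc_upper_iff _ |>.1 hab
  exact Λp.color_congr (by rw [half_dbl]) (by rw [half_dbl]; rfl) _ _

lemma ColoredPerm.lower_ofPair : (ColoredPerm.ofPair Λp Λm hp hm h).lower = Λm := by
  refine ColoredPartition.ext (matchingOfInvolution_eq_of_eq_partner hm h.pairing_perm_right)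
    fun a b hab _ => ?_
  obtain ⟨i, -, rfl, rfl⟩ := ColoredPerm.isArc_lower_iff _ |>.1 hab
  exact Λm.color_congr (by rw [half_dbl]; rfl) (by rw [half_dbl]) _ _

end Backward

namespace ColoredPerm
variable {n r : ℕ} (S : ColoredPerm n r)

lemma isPermPair_upper_lower : IsPermPair (partner S.upper.P) (partner S.lower.P) := by
  rw [partner_upper, partner_lower]
  exact isPermPair_pairing S.sigma

lemma ofPair_upper_lower (hp : IsMatching S.upper.P) (hm : IsMatching S.lower.P)
    (h : IsPermPair (partner S.upper.P) (partner S.lower.P)) :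
    ofPair S.upper S.lower hp hm h = S := by
  have hσ : (ofPair S.upper S.lower hp hm h).sigma = S.sigma := Equiv.ext fun i => by
    change permFun (partner S.upper.P) (partner S.lower.P) i = S.sigma i
    rw [partner_upper, partner_lower, permFun_pairing]
  refine ColoredPerm.ext hσ (fun i _ _ => ?_) (fun i _ _ => ?_)
  · exact S.cplus_congr (half_dbl i) _ _
  · exact S.cminus_congr (half_dbl i) _ _

noncomputable def equivMatchingPair : ColoredPerm n r ≃
    {p : ColoredPartition (2 * n) r × ColoredPartition (2 * n) r //
      IsMatching p.1.P ∧ IsMatching p.2.P ∧ IsPermPair (partner p.1.P) (partner p.2.P)} where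
  toFun S := ⟨(S.upper, S.lower), isMatching_matchingOfInvolution,
    isMatching_matchingOfInvolution, S.isPermPair_upper_lower⟩
  invFun p := ofPair p.1.1 p.1.2 p.2.1 p.2.2.1 p.2.2.2
  left_inv S := S.ofPair_upper_lower _ _ _
  right_inv _ := Subtype.ext (Prod.ext (upper_ofPair _ _ _) (lower_ofPair _ _ _))

end ColoredPerm

theorem stmt16_general (n r j k : ℕ) :
    Nonempty
      ({S : ColoredPerm n r // ¬PermHasCrossing S j ∧ ¬PermHasNesting S k} ≃
        {p : ColoredPartition (2 * n) r × ColoredPartition (2 * n) r //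
          IsMatching p.1.P ∧ IsMatching p.2.P ∧
          ¬HasCrossing p.1 j ∧ ¬HasNesting p.1 k ∧
          ¬HasCrossing p.2 j ∧ ¬HasNesting p.2 k ∧
          {x : Fin (2 * n) | x.1 % 2 = 0} =
            (blockMin p.1.P \ blockMax p.1.P) ∪ (blockMax p.2.P \ blockMin p.2.P) ∧
          Disjoint (blockMin p.1.P \ blockMax p.1.P) (blockMax p.2.P \ blockMin p.2.P) ∧
          {x : Fin (2 * n) | x.1 % 2 = 1} =
            (blockMax p.1.P \ blockMin p.1.P) ∪ (blockMin p.2.P \ blockMax p.2.P) ∧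
          Disjoint (blockMax p.1.P \ blockMin p.1.P) (blockMin p.2.P \ blockMax p.2.P)}) := by
  refine ⟨(ColoredPerm.equivMatchingPair.subtypeEquiv fun S => ?_).trans
    ((Equiv.subtypeSubtypeEquivSubtypeInter _ fun p => ¬HasCrossing p.1 j ∧ ¬HasNesting p.1 k ∧
      ¬HasCrossing p.2 j ∧ ¬HasNesting p.2 k).trans (Equiv.subtypeEquivRight fun p => ?_))⟩
  · change _ ↔ ¬HasCrossing S.upper j ∧ ¬HasNesting S.upper k ∧ ¬HasCrossing S.lower j ∧
      ¬HasNesting S.lower k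
    rw [S.permHasCrossing_iff, S.permHasNesting_iff]
    tauto
  · exact ⟨fun ⟨⟨hp, hm, h⟩, h₁, h₂, h₃, h₄⟩ =>
        ⟨hp, hm, h₁, h₂, h₃, h₄, (isPermPair_partner_iff hp hm).1 h⟩,
      fun ⟨hp, hm, h₁, h₂, h₃, h₄, hsets⟩ =>
        ⟨⟨hp, hm, (isPermPair_partner_iff hp hm).2 hsets⟩, h₁, h₂, h₃, h₄⟩⟩

/-- Bijection from `r`-colored `j`-noncrossing `k`-nonnesting permutations of `[n]`
to pairs `(Λ⁺, Λ⁻)` of `r`-colored `j`-noncrossing `k`-nonnesting matchings of `[2n]`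
with the odd numbers (0-based: even indices) the disjoint union of
`min(Λ⁺)∖max(Λ⁺)` and `max(Λ⁻)∖min(Λ⁻)`, and the even numbers the disjoint union of
`max(Λ⁺)∖min(Λ⁺)` and `min(Λ⁻)∖max(Λ⁻)`. -/
theorem stmt16 (n r j k : ℕ) (hn : 0 < n) (hr : 0 < r) (hj : 0 < j) (hk : 0 < k) :
    Nonempty
      ({S : ColoredPerm n r // ¬PermHasCrossing S j ∧ ¬PermHasNesting S k} ≃
        {p : ColoredPartition (2 * n) r × ColoredPartition (2 * n) r //
          IsMatching p.1.P ∧ IsMatching p.2.P ∧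
          ¬HasCrossing p.1 j ∧ ¬HasNesting p.1 k ∧
          ¬HasCrossing p.2 j ∧ ¬HasNesting p.2 k ∧
          {x : Fin (2 * n) | x.1 % 2 = 0} =
            (blockMin p.1.P \ blockMax p.1.P) ∪ (blockMax p.2.P \ blockMin p.2.P) ∧
          Disjoint (blockMin p.1.P \ blockMax p.1.P) (blockMax p.2.P \ blockMin p.2.P) ∧
          {x : Fin (2 * n) | x.1 % 2 = 1} =
            (blockMax p.1.P \ blockMin p.1.P) ∪ (blockMin p.2.P \ blockMax p.2.P) ∧
          Disjoint (blockMax p.1.P \ blockMin p.1.P) (blockMin p.2.P \ blockMax p.2.P)}) :=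
  stmt16_general n r j k
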